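/- Let p be an odd prime. Then every maximal subgroup M of SL(2,p) contains the central element -I (the negative of the identity matrix); consequently the maximal subgroups of SL(2,p) are in one-to-one correspondence with the maximal subgroups of PSL(2,p). -/
import Mathlib


open scoped BigOperators

/-- `SL(2,p)`: the group of `2 × 2` matrices of determinant `1` over `ZMod p`. -/
abbrev SL2 (p : ℕ) : Type := Matrix.SpecialLinearGroup (Fin 2) (ZMod p)

/-- The central element `-I` of `SL(2,p)`. -/
def negOne (p : ℕ) [Fact p.Prime] : SL2 p :=
  ⟨-1, by simp [Matrix.det_neg]⟩

/-- `PSL(2,p)`: the quotient of `SL(2,p)` by its center `{I, -I}`. -/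
abbrev PSL2 (p : ℕ) : Type := SL2 p ⧸ Subgroup.center (SL2 p)

section Aux

variable (p : ℕ) [Fact p.Prime]

lemma negOne_mem_center : negOne p ∈ Subgroup.center (SL2 p) := by
  rw [Matrix.SpecialLinearGroup.mem_center_iff]
  exact ⟨-1, by simp, by rw [map_neg, map_one]; rfl⟩

lemma center_le_zpowers :
    Subgroup.center (SL2 p) ≤ Subgroup.zpowers (negOne p) := by
  intro A hA
  obtain ⟨r, hr, hrA⟩ := Matrix.SpecialLinearGroup.mem_center_iff.mp hA
  have hr' : r * r = 1 := by
    have : r ^ 2 = 1 := by simpa using hr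
    rwa [sq] at this
  rcases mul_self_eq_one_iff.mp hr' with rfl | rfl
  · have : A = 1 := by
      apply Subtype.ext
      rw [← hrA, map_one]; rfl
    rw [this]; exact Subgroup.one_mem _
  · have : A = negOne p := by
      apply Subtype.ext
      rw [← hrA, map_neg, map_one]; rfl
    rw [this]; exact Subgroup.mem_zpowers _

/-- The element `S = [[0,1],[-1,0]]` of order 4. -/
def sFour : SL2 p := ⟨!![0, 1; -1, 0], by simp [Matrix.det_fin_two_of]⟩

lemma sFour_sq : (sFour p) ^ 2 = negOne p := by
  apply Subtype.ext
  show (!![0, 1; -1, 0] : Matrix (Fin 2) (Fin 2) (ZMod p)) ^ 2 = -1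
  rw [sq]
  ext i j
  fin_cases i <;> fin_cases j <;>
    simp [Matrix.mul_apply, Fin.sum_univ_succ, Matrix.one_apply]

lemma sq_eq_one_of_mem_center {z : SL2 p} (hz : z ∈ Subgroup.center (SL2 p)) :
    z ^ 2 = 1 := by
  obtain ⟨k, rfl⟩ := center_le_zpowers p hz
  have h1 : (negOne p) ^ 2 = 1 := by
    apply Subtype.ext
    show (-1 : Matrix (Fin 2) (Fin 2) (ZMod p)) ^ 2 = 1
    rw [neg_one_sq]
  rw [← zpow_natCast, ← zpow_mul, mul_comm, zpow_mul, zpow_natCast, h1, one_zpow]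

lemma coatom_negOne_mem (M : Subgroup (SL2 p)) (hM : IsCoatom M) : negOne p ∈ M := by
  by_contra hne
  have hsup : M ⊔ Subgroup.center (SL2 p) = ⊤ := by
    apply hM.2
    refine lt_of_le_of_ne le_sup_left fun h => hne ?_
    rw [h]
    exact SetLike.le_def.mp le_sup_right (negOne_mem_center p)
  have hmem : (sFour p : SL2 p) ∈ (↑(M ⊔ Subgroup.center (SL2 p)) : Set (SL2 p)) := by
    rw [hsup]; trivial
  rw [Subgroup.mul_normal] at hmem
  obtain ⟨m, hm, z, hz, hmz⟩ := hmem
  have hcomm : Commute m z := (Subgroup.mem_center_iff.mp hz m)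
  have : negOne p = m ^ 2 := by
    rw [← sFour_sq p, ← hmz, hcomm.mul_pow, sq_eq_one_of_mem_center p hz, mul_one]
  exact hne (this ▸ M.pow_mem hm 2)

lemma coatom_center_le (M : Subgroup (SL2 p)) (hM : IsCoatom M) :
    Subgroup.center (SL2 p) ≤ M :=
  le_trans (center_le_zpowers p)
    ((Subgroup.zpowers_le).mpr (coatom_negOne_mem p M hM))

end Aux

/-- For an odd prime `p`, every maximal subgroup of `SL(2,p)` contains `-I`; consequently
`M ↦ M/{±I}` is a bijection between the maximal subgroups of `SL(2,p)` and the maximal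
subgroups of `PSL(2,p)`. -/
theorem maximal_subgroups_SL2_contain_negOne (p : ℕ) [Fact p.Prime] (hp : Odd p) :
    (∀ M : Subgroup (SL2 p), IsCoatom M → negOne p ∈ M) ∧
    Set.BijOn (fun M : Subgroup (SL2 p) =>
        Subgroup.map (QuotientGroup.mk' (Subgroup.center (SL2 p))) M)
      {M : Subgroup (SL2 p) | IsCoatom M} {M : Subgroup (PSL2 p) | IsCoatom M} := by
  set N := Subgroup.center (SL2 p)
  set π := QuotientGroup.mk' N
  have hπ : Function.Surjective π := QuotientGroup.mk'_surjective N
  have hker : π.ker = N := QuotientGroup.ker_mk' N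
  have hcm : ∀ M : Subgroup (SL2 p), N ≤ M → Subgroup.comap π (Subgroup.map π M) = M := by
    intro M hNM
    exact Subgroup.comap_map_eq_self (by rw [hker]; exact hNM)
  have hmc : ∀ K : Subgroup (PSL2 p), Subgroup.map π (Subgroup.comap π K) = K :=
    fun K => Subgroup.map_comap_eq_self_of_surjective hπ K
  refine ⟨coatom_negOne_mem p, ?_, ?_, ?_⟩
  · -- MapsTo
    intro M hM
    have hNM : N ≤ M := coatom_center_le p M hM
    show IsCoatom (Subgroup.map π M)
    constructor
    · intro htop
      apply hM.1
      rw [← hcm M hNM, htop, Subgroup.comap_top]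
    · intro K hK
      have h1 : M ≤ Subgroup.comap π K := by
        rw [← hcm M hNM]; exact Subgroup.comap_mono hK.le
      have h2 : M ≠ Subgroup.comap π K := by
        intro h
        apply hK.ne
        rw [← hmc K, ← h]
      have := hM.2 _ (lt_of_le_of_ne h1 h2)
      rw [← hmc K, this]
      exact Subgroup.map_top_of_surjective π hπ
  · -- InjOn
    intro M1 hM1 M2 hM2 h
    have h1 : N ≤ M1 := coatom_center_le p M1 hM1
    have h2 : N ≤ M2 := coatom_center_le p M2 hM2
    have h' : Subgroup.map π M1 = Subgroup.map π M2 := h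
    rw [← hcm M1 h1, ← hcm M2 h2, h']
  · -- SurjOn
    intro K hK
    have hKc : IsCoatom K := hK
    refine ⟨Subgroup.comap π K, ?_, hmc K⟩
    show IsCoatom (Subgroup.comap π K)
    have hNle : N ≤ Subgroup.comap π K := by
      intro x hx
      have hx1 : π x = 1 := by
        rw [← MonoidHom.mem_ker, hker]; exact hx
      show π x ∈ K
      rw [hx1]; exact K.one_mem
    constructor
    · intro htop
      apply hK.1
      rw [← hmc K, htop]
      exact Subgroup.map_top_of_surjective π hπ
    · intro B hB
      have hNB : N ≤ B := le_trans hNle hB.le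
      have h1 : K ≤ Subgroup.map π B := by
        rw [← hmc K]; exact Subgroup.map_mono hB.le
      have h2 : K ≠ Subgroup.map π B := by
        intro h
        apply hB.ne
        rw [← hcm B hNB, ← h]
      have := hK.2 _ (lt_of_le_of_ne h1 h2)
      rw [← hcm B hNB, this]
      exact Subgroup.comap_top π
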